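/- arXiv:1906.08073 — 3 statements merged into one kernel-verified Lean document; each statement's English description precedes it below -/
import Mathlib

section
/- Let d ≥ 1, ε > 0, and let Ψ satisfy the kernel assumptions. Let f : ℝ^d×ℝ² → [0,∞) be measurable and compactly supported with f ∈ L¹∩L^∞, with macroscopic density ρ(x) := ∫ f(x,v,w) dv dw and mean potential V(x) defined by ρV = ∫ v f dv dw where ρ(x) > 0 and V(x) = 0 where ρ(x) = 0. Then the following identity holds: (1/2)∬ Ψ_ε(‖x−x'‖)|v−v'|² f(x,v,w) f(x',v',w') dx dv dw dx' dv' dw' = ∫ (Ψ_ε(‖·‖)∗ρ)(x) (∫ |v−V(x)|² f(x,v,w) dv dw) dx + (1/2)∬ Ψ_ε(‖x−x'‖)|V(x)−V(x')|² ρ(x)ρ(x') dx dx'. -/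
/-!
Write `Mₙ(x) = ∫∫ vⁿ f(x,v,w) dv dw`, so that `ρ = M₀` and `ρV = M₁`, and
`⟨a, b⟩ = ∫ a (Ψ_ε ⋆ b)`. Expanding the squares and integrating out the velocities, the
left side is `½ (⟨M₂, ρ⟩ - 2 ⟨M₁, M₁⟩ + ⟨ρ, M₂⟩)`, the internal part is `⟨M₂ - V M₁, ρ⟩` and,
since `V² ρ = V M₁`, the macroscopic part is `½ (⟨V M₁, ρ⟩ - 2 ⟨M₁, M₁⟩ + ⟨ρ, V M₁⟩)`. The
kernel is even, so `⟨a, b⟩ = ⟨b, a⟩` by Fubini, and both sides equal `⟨M₂, ρ⟩ - ⟨M₁, M₁⟩`.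
Because `f` is bounded with compact support, all `Mₙ` and `V M₁` lie in `L¹ ∩ L^∞` (for `V M₁`
because `|V| ≤ R` once `|v| ≤ R` on the support), which justifies every exchange of integrals.
-/

open MeasureTheory Real Filter Topology
open scoped RealInnerProductSpace

noncomputable section

abbrev Rd (d : ℕ) := EuclideanSpace ℝ (Fin d)

/-- The cubic FitzHugh–Nagumo nonlinearity `N(v) = v (1-v) (v-a)`. -/
def Ncube (a v : ℝ) : ℝ := v * (1 - v) * (v - a)

/-- Rescaled connectivity kernel `Ψ_ε(r) = ε^{-d} Ψ(r/ε)`. -/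
def psiEps (d : ℕ) (Ψ : ℝ → ℝ) (ε r : ℝ) : ℝ := (ε ^ d)⁻¹ * Ψ (r / ε)

/-- The nonlocal interaction term `K_ε[g](x,v)`. -/
def Kker (d : ℕ) (Ψ : ℝ → ℝ) (ε : ℝ) (g : Rd d → ℝ → ℝ → ℝ) (x : Rd d) (v : ℝ) : ℝ :=
  (ε ^ 2)⁻¹ * ∫ x' : Rd d, ∫ v' : ℝ, ∫ w' : ℝ, psiEps d Ψ ε ‖x - x'‖ * (v - v') * g x' v' w'

/-- Partial derivative of `g` in the `i`-th coordinate direction. -/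
def pdAt {d : ℕ} (g : Rd d → ℝ) (i : Fin d) (x : Rd d) : ℝ :=
  fderiv ℝ g x (EuclideanSpace.single i (1 : ℝ))

/-- Laplacian of `g`. -/
def lapl {d : ℕ} (g : Rd d → ℝ) (x : Rd d) : ℝ := ∑ i, pdAt (pdAt g i) i x

/-- Macroscopic density associated to a kinetic density `g`. -/
def rhoOf (d : ℕ) (g : Rd d → ℝ → ℝ → ℝ) (x : Rd d) : ℝ := ∫ v : ℝ, ∫ w : ℝ, g x v w

/-- Macroscopic mean membrane potential associated to a kinetic density `g`. -/
def VOf (d : ℕ) (g : Rd d → ℝ → ℝ → ℝ) (x : Rd d) : ℝ :=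
  if rhoOf d g x = 0 then 0 else (∫ v : ℝ, ∫ w : ℝ, v * g x v w) / rhoOf d g x

/-- Macroscopic mean adaptation variable associated to a kinetic density `g`. -/
def WOf (d : ℕ) (g : Rd d → ℝ → ℝ → ℝ) (x : Rd d) : ℝ :=
  if rhoOf d g x = 0 then 0 else (∫ v : ℝ, ∫ w : ℝ, w * g x v w) / rhoOf d g x

open scoped ENNReal Convolution

theorem integral_const_mul_add_const_mul_add_const_mul {α : Type*} [MeasurableSpace α]
    {μ : Measure α} {u₁ u₂ u₃ : α → ℝ} (h₁ : Integrable u₁ μ) (h₂ : Integrable u₂ μ)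
    (h₃ : Integrable u₃ μ) (c₁ c₂ c₃ : ℝ) :
    ∫ x, (c₁ * u₁ x + c₂ * u₂ x + c₃ * u₃ x) ∂μ
      = c₁ * ∫ x, u₁ x ∂μ + c₂ * ∫ x, u₂ x ∂μ + c₃ * ∫ x, u₃ x ∂μ := by
  rw [integral_add (by fun_prop) (by fun_prop), integral_add (by fun_prop) (by fun_prop),
    integral_const_mul, integral_const_mul, integral_const_mul]

section BoundedSupport

variable {α E : Type*} [MeasurableSpace α] [NormedAddCommGroup E]
  {μ : Measure α} {F : α → E} {s : Set α} {C : ℝ}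

theorem integrable_of_support_subset_of_norm_le (hs : MeasurableSet s) (hμs : μ s < ∞)
    (hF : AEStronglyMeasurable F μ) (hsupp : Function.support F ⊆ s)
    (hC : ∀ x ∈ s, ‖F x‖ ≤ C) : Integrable F μ :=
  (integrableOn_iff_integrable_of_support_subset hsupp).1 <|
    Measure.integrableOn_of_bounded hμs.ne hF (ae_restrict_of_forall_mem hs hC)

theorem norm_integral_le_of_support_subset_of_norm_le [NormedSpace ℝ E] (hμs : μ s < ∞)
    (hsupp : Function.support F ⊆ s) (hC : ∀ x ∈ s, ‖F x‖ ≤ C) :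
    ‖∫ x, F x ∂μ‖ ≤ C * μ.real s := by
  rw [← setIntegral_eq_integral_of_forall_compl_eq_zero fun x hx =>
    Function.notMem_support.1 fun h => hx (hsupp h)]
  exact norm_setIntegral_le_of_norm_le_const hμs hC

end BoundedSupport

def vMoment {X : Type*} (f : X → ℝ → ℝ → ℝ) (n : ℕ) (x : X) : ℝ :=
  ∫ v, ∫ w, v ^ n * f x v w

theorem integral_integral_quadratic_mul {X : Type*} {f : X → ℝ → ℝ → ℝ} {x : X}
    (hf : ∀ n ≤ 2, Integrable fun v => ∫ w, v ^ n * f x v w) (a b c : ℝ) :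
    ∫ v, ∫ w, (a * v ^ 2 + b * v + c) * f x v w
      = a * vMoment f 2 x + b * vMoment f 1 x + c * vMoment f 0 x := by
  have hexpand : ∀ v : ℝ, ∫ w, (a * v ^ 2 + b * v + c) * f x v w
      = a * (∫ w, v ^ 2 * f x v w) + b * (∫ w, v ^ 1 * f x v w) + c * ∫ w, v ^ 0 * f x v w := by
    intro v
    rw [integral_const_mul, integral_const_mul, integral_const_mul, integral_const_mul]
    ring
  simp only [hexpand]
  exact integral_const_mul_add_const_mul_add_const_mul (hf 2 le_rfl) (hf 1 one_le_two)
    (hf 0 zero_le_two) a b c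

theorem integral_integral_sq_sub_mul {X : Type*} {f : X → ℝ → ℝ → ℝ} {x : X}
    (hf : ∀ n ≤ 2, Integrable fun v => ∫ w, v ^ n * f x v w) (c : ℝ) :
    ∫ v, ∫ w, (v - c) ^ 2 * f x v w
      = vMoment f 2 x - 2 * c * vMoment f 1 x + c ^ 2 * vMoment f 0 x := by
  have hsq : ∀ v : ℝ, (v - c) ^ 2 = 1 * v ^ 2 + -2 * c * v + c ^ 2 := fun v => by ring
  simp_rw [hsq, integral_integral_quadratic_mul hf]
  ring

theorem exists_norm_le_of_hasCompactSupport {X : Type*} [TopologicalSpace X]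
    {f : X → ℝ → ℝ → ℝ} (hf : HasCompactSupport fun q : X × ℝ × ℝ => f q.1 q.2.1 q.2.2) :
    ∃ R, 0 ≤ R ∧ ∀ x v w, f x v w ≠ 0 → ‖(v, w)‖ ≤ R := by
  obtain ⟨R, hR⟩ := (hf.isCompact.image continuous_snd).isBounded.subset_closedBall 0
  refine ⟨max R 0, le_max_right _ _, fun x v w h => ?_⟩
  have hvw : (v, w) ∈ Prod.snd '' tsupport fun q : X × ℝ × ℝ => f q.1 q.2.1 q.2.2 :=
    ⟨(x, v, w), subset_tsupport _ h, rfl⟩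
  exact (mem_closedBall_zero_iff.1 (hR hvw)).trans (le_max_left _ _)

section CompactlySupportedDensity

variable {X : Type*} {f : X → ℝ → ℝ → ℝ} {B R : ℝ}

theorem support_pow_mul_slice_subset (hR : ∀ x v w, f x v w ≠ 0 → ‖(v, w)‖ ≤ R) (x : X)
    (n : ℕ) : Function.support (fun p : ℝ × ℝ => p.1 ^ n * f x p.1 p.2)
      ⊆ Metric.closedBall 0 R :=
  fun p hp => mem_closedBall_zero_iff.2 (hR x p.1 p.2 (right_ne_zero_of_mul hp))

theorem norm_pow_mul_slice_le (hB : ∀ x v w, ‖f x v w‖ ≤ B) (x : X) (n : ℕ) {p : ℝ × ℝ}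
    (hp : p ∈ Metric.closedBall 0 R) : ‖p.1 ^ n * f x p.1 p.2‖ ≤ R ^ n * B := by
  have hp₁ : ‖p.1‖ ≤ R := (norm_fst_le p).trans (mem_closedBall_zero_iff.1 hp)
  rw [norm_mul, norm_pow]
  exact mul_le_mul (pow_le_pow_left₀ (norm_nonneg _) hp₁ n) (hB x p.1 p.2) (norm_nonneg _)
    (pow_nonneg ((norm_nonneg _).trans hp₁) n)

variable [MeasurableSpace X] (hmeas : Measurable fun q : X × ℝ × ℝ => f q.1 q.2.1 q.2.2)
  (hB : ∀ x v w, ‖f x v w‖ ≤ B) (hR : ∀ x v w, f x v w ≠ 0 → ‖(v, w)‖ ≤ R)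
include hmeas hB hR

theorem integrable_pow_mul_slice (x : X) (n : ℕ) :
    Integrable fun p : ℝ × ℝ => p.1 ^ n * f x p.1 p.2 :=
  integrable_of_support_subset_of_norm_le Metric.isClosed_closedBall.measurableSet
    measure_closedBall_lt_top
    ((measurable_fst.pow_const n).mul (hmeas.comp measurable_prodMk_left)).aestronglyMeasurable
    (support_pow_mul_slice_subset hR x n) fun _ hp => norm_pow_mul_slice_le hB x n hp

theorem vMoment_eq_integral_prod (x : X) (n : ℕ) :
    vMoment f n x = ∫ p : ℝ × ℝ, p.1 ^ n * f x p.1 p.2 :=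
  (integral_prod _ (integrable_pow_mul_slice hmeas hB hR x n)).symm

theorem integrable_integral_pow_mul (x : X) (n : ℕ) :
    Integrable fun v => ∫ w, v ^ n * f x v w :=
  (integrable_pow_mul_slice hmeas hB hR x n).integral_prod_left

theorem abs_vMoment_le (x : X) (n : ℕ) :
    |vMoment f n x| ≤ R ^ n * B * volume.real (Metric.closedBall (0 : ℝ × ℝ) R) := by
  rw [vMoment_eq_integral_prod hmeas hB hR, ← Real.norm_eq_abs]
  exact norm_integral_le_of_support_subset_of_norm_le measure_closedBall_lt_top
    (support_pow_mul_slice_subset hR x n) fun _ hp => norm_pow_mul_slice_le hB x n hp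

theorem measurable_vMoment (n : ℕ) : Measurable (vMoment f n) := by
  rw [funext (vMoment_eq_integral_prod hmeas hB hR · n)]
  exact (((measurable_fst.comp measurable_snd).pow_const n).mul hmeas).stronglyMeasurable
    |>.integral_prod_right' |>.measurable

theorem memLp_top_vMoment (μ : Measure X) (n : ℕ) : MemLp (vMoment f n) ∞ μ :=
  memLp_top_of_bound (measurable_vMoment hmeas hB hR n).aestronglyMeasurable _
    (ae_of_all _ fun x => (abs_vMoment_le hmeas hB hR x n :))

theorem integrable_vMoment {μ : Measure X} [SFinite μ]
    (hint : Integrable (fun q : X × ℝ × ℝ => f q.1 q.2.1 q.2.2) (μ.prod volume)) (n : ℕ) :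
    Integrable (vMoment f n) μ := by
  have hbound : ∀ q : X × ℝ × ℝ,
      ‖q.2.1 ^ n * f q.1 q.2.1 q.2.2‖ ≤ R ^ n * ‖f q.1 q.2.1 q.2.2‖ := by
    rintro ⟨x, v, w⟩
    rcases eq_or_ne (f x v w) 0 with h | h
    · simp [h]
    · rw [norm_mul, norm_pow]
      exact mul_le_mul_of_nonneg_right
        (pow_le_pow_left₀ (norm_nonneg _) ((norm_fst_le (v, w)).trans (hR x v w h)) n)
        (norm_nonneg _)
  have hmoment : Integrable (fun q : X × ℝ × ℝ => q.2.1 ^ n * f q.1 q.2.1 q.2.2)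
      (μ.prod volume) :=
    (hint.norm.const_mul _).mono'
      (((measurable_fst.comp measurable_snd).pow_const n).mul hmeas).aestronglyMeasurable
      (ae_of_all _ hbound)
  rw [funext (vMoment_eq_integral_prod hmeas hB hR · n)]
  exact hmoment.integral_prod_left

theorem abs_vMoment_one_le (hnn : ∀ x v w, 0 ≤ f x v w) (x : X) :
    |vMoment f 1 x| ≤ R * vMoment f 0 x := by
  rw [vMoment_eq_integral_prod hmeas hB hR x 1, vMoment_eq_integral_prod hmeas hB hR x 0,
    ← integral_const_mul, ← Real.norm_eq_abs]
  refine (norm_integral_le_integral_norm _).trans <| integral_mono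
    (integrable_pow_mul_slice hmeas hB hR x 1).norm
    ((integrable_pow_mul_slice hmeas hB hR x 0).const_mul R) fun p => ?_
  rcases eq_or_ne (f x p.1 p.2) 0 with h | h
  · simp [h]
  · rw [pow_one, pow_zero, one_mul, norm_mul, Real.norm_of_nonneg (hnn x p.1 p.2)]
    exact mul_le_mul_of_nonneg_right ((norm_fst_le p).trans (hR x p.1 p.2 h)) (hnn x p.1 p.2)

end CompactlySupportedDensity

-- `MemLp.comp_fst` asks for a finite `ν`; for `p = ∞` s-finiteness is enough.
theorem MeasureTheory.MemLp.comp_fst_top {α β : Type*} [MeasurableSpace α] [MeasurableSpace β]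
    {μ : Measure α} {ν : Measure β} [SFinite ν] {a : α → ℝ} (ha : MemLp a ∞ μ) :
    MemLp (fun p : α × β => a p.1) ∞ (μ.prod ν) := by
  refine ⟨ha.1.comp_quasiMeasurePreserving Measure.quasiMeasurePreserving_fst, ?_⟩
  have ha_top := ha.2
  rw [eLpNorm_exponent_top] at ha_top ⊢
  exact (eLpNormEssSup_le_of_ae_enorm_bound
    (Measure.quasiMeasurePreserving_fst.ae ae_le_eLpNormEssSup)).trans_lt ha_top

section SymmetricKernel

variable {G : Type*} [AddCommGroup G] [MeasureSpace G] [MeasurableAdd₂ G] [MeasurableNeg G]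
  [(volume : Measure G).IsAddLeftInvariant] {k : G → ℝ}

theorem integrable_comp_sub_left_mul [(volume : Measure G).IsNegInvariant] (hk : Integrable k)
    {b : G → ℝ} (hb : MemLp b ∞) (x : G) : Integrable fun t => k (x - t) * b t :=
  (hk.comp_sub_left x).mul_of_top_left hb

theorem integral_comp_sub_left_mul_lincomb [(volume : Measure G).IsNegInvariant]
    (hk : Integrable k) {u₁ u₂ u₃ : G → ℝ} (h₁ : MemLp u₁ ∞) (h₂ : MemLp u₂ ∞) (h₃ : MemLp u₃ ∞)
    (c₁ c₂ c₃ : ℝ) (x : G) :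
    ∫ t, k (x - t) * (c₁ * u₁ t + c₂ * u₂ t + c₃ * u₃ t)
      = c₁ * (k ⋆ u₁) x + c₂ * (k ⋆ u₂) x + c₃ * (k ⋆ u₃) x := by
  simp_rw [convolution_lsmul_swap, smul_eq_mul, mul_add, mul_left_comm (k _)]
  exact integral_const_mul_add_const_mul_add_const_mul (integrable_comp_sub_left_mul hk h₁ x)
    (integrable_comp_sub_left_mul hk h₂ x) (integrable_comp_sub_left_mul hk h₃ x) c₁ c₂ c₃

theorem integrable_mul_convolution [SFinite (volume : Measure G)] (hk : Integrable k)
    {a b : G → ℝ} (ha : MemLp a ∞) (hb : Integrable b) : Integrable fun x => a x * (k ⋆ b) x :=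
  (hk.integrable_convolution _ hb).mul_of_top_right ha

theorem integral_mul_convolution_comm [SFinite (volume : Measure G)]
    [(volume : Measure G).IsNegInvariant] (hk_even : ∀ y, k (-y) = k y) (hk : Integrable k)
    {a b : G → ℝ} (ha : MemLp a ∞) (hb : Integrable b) :
    ∫ x, a x * (k ⋆ b) x = ∫ x, b x * (k ⋆ a) x := by
  have hprod : Integrable (Function.uncurry fun x t => a x * (k (x - t) * b t))
      (volume.prod volume) := by
    refine ((hb.convolution_integrand (ContinuousLinearMap.lsmul ℝ ℝ) hk).mul_of_top_right
      ha.comp_fst_top).congr (ae_of_all _ fun p => ?_)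
    simp only [Pi.mul_apply, ContinuousLinearMap.lsmul_apply, smul_eq_mul, Function.uncurry]
    ring
  simp_rw [convolution_lsmul_swap, smul_eq_mul, ← integral_const_mul]
  rw [integral_integral_swap hprod]
  refine integral_congr_ae (ae_of_all _ fun t => integral_congr_ae (ae_of_all _ fun x => ?_))
  simp only [← hk_even (x - t), neg_sub]
  ring

end SymmetricKernel

section KineticDissipation

variable {G : Type*} [AddCommGroup G] [MeasureSpace G] [MeasurableAdd₂ G] [MeasurableNeg G]
  [SFinite (volume : Measure G)] [(volume : Measure G).IsAddLeftInvariant]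
  [(volume : Measure G).IsNegInvariant] {k : G → ℝ} {f : G → ℝ → ℝ → ℝ}

theorem integral_kinetic_dissipation_eq (hk : Integrable k)
    (hslice : ∀ x, ∀ n ≤ 2, Integrable fun v => ∫ w, v ^ n * f x v w)
    (hint : ∀ n ≤ 2, Integrable (vMoment f n)) (hbdd : ∀ n ≤ 2, MemLp (vMoment f n) ∞) :
    ∫ x, ∫ v, ∫ w, ∫ x', ∫ v', ∫ w', k (x - x') * (v - v') ^ 2 * f x v w * f x' v' w'
      = (∫ x, vMoment f 2 x * (k ⋆ vMoment f 0) x)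
        - 2 * (∫ x, vMoment f 1 x * (k ⋆ vMoment f 1) x)
        + ∫ x, vMoment f 0 x * (k ⋆ vMoment f 2) x := by
  have hpoint : ∀ x, ∫ v, ∫ w, ∫ x', ∫ v', ∫ w',
        k (x - x') * (v - v') ^ 2 * f x v w * f x' v' w'
      = 1 * (vMoment f 2 x * (k ⋆ vMoment f 0) x)
        + -2 * (vMoment f 1 x * (k ⋆ vMoment f 1) x)
        + 1 * (vMoment f 0 x * (k ⋆ vMoment f 2) x) := by
    intro x
    have hinner : ∀ v w x', ∫ v', ∫ w', k (x - x') * (v - v') ^ 2 * f x v w * f x' v' w'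
        = f x v w * (k (x - x') * (1 * vMoment f 2 x' + -2 * v * vMoment f 1 x'
          + v ^ 2 * vMoment f 0 x')) := by
      intro v w x'
      have hpoly : ∀ v' w', k (x - x') * (v - v') ^ 2 * f x v w * f x' v' w'
          = (k (x - x') * f x v w * v' ^ 2 + -2 * v * (k (x - x') * f x v w) * v'
            + v ^ 2 * (k (x - x') * f x v w)) * f x' v' w' := fun _ _ => by ring
      simp_rw [hpoly, integral_integral_quadratic_mul (hslice x')]
      ring
    have hpoly : ∀ v w, f x v w * (1 * (k ⋆ vMoment f 2) x + -2 * v * (k ⋆ vMoment f 1) x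
          + v ^ 2 * (k ⋆ vMoment f 0) x)
        = ((k ⋆ vMoment f 0) x * v ^ 2 + -2 * (k ⋆ vMoment f 1) x * v
          + (k ⋆ vMoment f 2) x) * f x v w := fun _ _ => by ring
    simp_rw [hinner, integral_const_mul, integral_comp_sub_left_mul_lincomb hk (hbdd 2 le_rfl)
      (hbdd 1 one_le_two) (hbdd 0 zero_le_two), hpoly, integral_integral_quadratic_mul (hslice x)]
    ring
  simp_rw [hpoint]
  rw [integral_const_mul_add_const_mul_add_const_mul
    (integrable_mul_convolution hk (hbdd 2 le_rfl) (hint 0 zero_le_two))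
    (integrable_mul_convolution hk (hbdd 1 one_le_two) (hint 1 one_le_two))
    (integrable_mul_convolution hk (hbdd 0 zero_le_two) (hint 2 le_rfl))]
  ring

theorem integral_internal_dissipation_eq (hk : Integrable k)
    (hslice : ∀ x, ∀ n ≤ 2, Integrable fun v => ∫ w, v ^ n * f x v w)
    (hint : ∀ n ≤ 2, Integrable (vMoment f n)) (hbdd : ∀ n ≤ 2, MemLp (vMoment f n) ∞)
    {V : G → ℝ} (hV : ∀ x, V x * vMoment f 0 x = vMoment f 1 x)
    (hVbdd : MemLp (fun x => V x * vMoment f 1 x) ∞) :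
    ∫ x, (∫ x', k (x - x') * vMoment f 0 x') * ∫ v, ∫ w, (v - V x) ^ 2 * f x v w
      = (∫ x, vMoment f 2 x * (k ⋆ vMoment f 0) x)
        - ∫ x, V x * vMoment f 1 x * (k ⋆ vMoment f 0) x := by
  have hpoint : ∀ x, (∫ x', k (x - x') * vMoment f 0 x') * ∫ v, ∫ w, (v - V x) ^ 2 * f x v w
      = vMoment f 2 x * (k ⋆ vMoment f 0) x - V x * vMoment f 1 x * (k ⋆ vMoment f 0) x := by
    intro x
    rw [integral_integral_sq_sub_mul (hslice x), convolution_lsmul_swap]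
    simp only [smul_eq_mul]
    linear_combination (∫ x', k (x - x') * vMoment f 0 x') * V x * hV x
  simp_rw [hpoint]
  exact integral_sub (integrable_mul_convolution hk (hbdd 2 le_rfl) (hint 0 zero_le_two))
    (integrable_mul_convolution hk hVbdd (hint 0 zero_le_two))

theorem integral_macroscopic_dissipation_eq (hk : Integrable k)
    (hint : ∀ n ≤ 2, Integrable (vMoment f n)) (hbdd : ∀ n ≤ 2, MemLp (vMoment f n) ∞)
    {V : G → ℝ} (hV : ∀ x, V x * vMoment f 0 x = vMoment f 1 x)
    (hVint : Integrable fun x => V x * vMoment f 1 x)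
    (hVbdd : MemLp (fun x => V x * vMoment f 1 x) ∞) :
    ∫ x, ∫ x', k (x - x') * (V x - V x') ^ 2 * vMoment f 0 x * vMoment f 0 x'
      = (∫ x, V x * vMoment f 1 x * (k ⋆ vMoment f 0) x)
        - 2 * (∫ x, vMoment f 1 x * (k ⋆ vMoment f 1) x)
        + ∫ x, vMoment f 0 x * (k ⋆ fun x' => V x' * vMoment f 1 x') x := by
  have hpoint : ∀ x, ∫ x', k (x - x') * (V x - V x') ^ 2 * vMoment f 0 x * vMoment f 0 x'
      = 1 * (V x * vMoment f 1 x * (k ⋆ vMoment f 0) x)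
        + -2 * (vMoment f 1 x * (k ⋆ vMoment f 1) x)
        + 1 * (vMoment f 0 x * (k ⋆ fun x' => V x' * vMoment f 1 x') x) := by
    intro x
    have hpoly : ∀ x', k (x - x') * (V x - V x') ^ 2 * vMoment f 0 x * vMoment f 0 x'
        = k (x - x') * (V x * vMoment f 1 x * vMoment f 0 x' + -2 * vMoment f 1 x * vMoment f 1 x'
          + vMoment f 0 x * (V x' * vMoment f 1 x')) := fun x' => by
      rw [← hV x, ← hV x']
      ring
    simp_rw [hpoly]
    rw [integral_comp_sub_left_mul_lincomb hk (hbdd 0 zero_le_two) (hbdd 1 one_le_two) hVbdd]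
    ring
  simp_rw [hpoint]
  rw [integral_const_mul_add_const_mul_add_const_mul
    (integrable_mul_convolution hk hVbdd (hint 0 zero_le_two))
    (integrable_mul_convolution hk (hbdd 1 one_le_two) (hint 1 one_le_two))
    (integrable_mul_convolution hk (hbdd 0 zero_le_two) hVint)]
  ring

theorem kinetic_dissipation_decomposition (hk_even : ∀ y, k (-y) = k y) (hk : Integrable k)
    (hslice : ∀ x, ∀ n ≤ 2, Integrable fun v => ∫ w, v ^ n * f x v w)
    (hint : ∀ n ≤ 2, Integrable (vMoment f n)) (hbdd : ∀ n ≤ 2, MemLp (vMoment f n) ∞)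
    {V : G → ℝ} (hV : ∀ x, V x * vMoment f 0 x = vMoment f 1 x)
    (hVint : Integrable fun x => V x * vMoment f 1 x)
    (hVbdd : MemLp (fun x => V x * vMoment f 1 x) ∞) :
    (1 / 2) * (∫ x, ∫ v, ∫ w, ∫ x', ∫ v', ∫ w',
        k (x - x') * (v - v') ^ 2 * f x v w * f x' v' w')
      = (∫ x, (∫ x', k (x - x') * vMoment f 0 x') * ∫ v, ∫ w, (v - V x) ^ 2 * f x v w)
        + (1 / 2) * ∫ x, ∫ x', k (x - x') * (V x - V x') ^ 2 * vMoment f 0 x * vMoment f 0 x' := by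
  rw [integral_kinetic_dissipation_eq hk hslice hint hbdd,
    integral_internal_dissipation_eq hk hslice hint hbdd hV hVbdd,
    integral_macroscopic_dissipation_eq hk hint hbdd hV hVint hVbdd,
    integral_mul_convolution_comm hk_even hk (hbdd 0 zero_le_two) (hint 2 le_rfl),
    integral_mul_convolution_comm hk_even hk (hbdd 0 zero_le_two) hVint]
  ring

end KineticDissipation

theorem integrable_psiEps {E : Type*} [NormedAddCommGroup E] [NormedSpace ℝ E]
    [MeasurableSpace E] [BorelSpace E] [FiniteDimensional ℝ E] {μ : Measure E}
    [μ.IsAddHaarMeasure] (n : ℕ) {Ψ : ℝ → ℝ} {ε : ℝ} (hε : 0 < ε)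
    (hΨ : Integrable (fun y : E => Ψ ‖y‖) μ) : Integrable (fun y : E => psiEps n Ψ ε ‖y‖) μ := by
  refine (((integrable_comp_smul_iff μ _ (inv_ne_zero hε.ne')).2 hΨ).const_mul (ε ^ n)⁻¹).congr
    (ae_of_all _ fun y => ?_)
  simp only [psiEps, norm_smul, Real.norm_eq_abs, abs_inv, abs_of_pos hε, div_eq_inv_mul]

section MeanPotential

variable {d : ℕ} {f : Rd d → ℝ → ℝ → ℝ} {R : ℝ}

theorem rhoOf_eq_vMoment : rhoOf d f = vMoment f 0 := by
  funext x
  simp [rhoOf, vMoment]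

theorem VOf_eq_ite (x : Rd d) :
    VOf d f x = if vMoment f 0 x = 0 then 0 else vMoment f 1 x / vMoment f 0 x := by
  simp [VOf, rhoOf_eq_vMoment, vMoment]

theorem VOf_mul_vMoment_zero {x : Rd d} (h : |vMoment f 1 x| ≤ R * vMoment f 0 x) :
    VOf d f x * vMoment f 0 x = vMoment f 1 x := by
  rw [VOf_eq_ite]
  split_ifs with h₀
  · rw [h₀, mul_zero, abs_nonpos_iff] at h
    rw [h, zero_mul]
  · exact div_mul_cancel₀ _ h₀

theorem memLp_top_VOf (hR : 0 ≤ R) (h : ∀ x, |vMoment f 1 x| ≤ R * vMoment f 0 x)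
    (h₀ : Measurable (vMoment f 0)) (h₁ : Measurable (vMoment f 1)) (μ : Measure (Rd d)) :
    MemLp (VOf d f) ∞ μ := by
  refine memLp_top_of_bound ?_ R (ae_of_all _ fun x => ?_)
  · rw [funext VOf_eq_ite]
    exact (Measurable.ite (h₀ (measurableSet_singleton 0)) measurable_const
      (h₁.div h₀)).aestronglyMeasurable
  · rw [Real.norm_eq_abs, VOf_eq_ite]
    split_ifs with h₀x
    · simpa using hR
    · rw [abs_div, div_le_iff₀ (abs_pos.2 h₀x)]
      exact (h x).trans (mul_le_mul_of_nonneg_left (le_abs_self _) hR)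

end MeanPotential

theorem stmt5_general (d : ℕ) (ε : ℝ) (hε : 0 < ε) (Ψ : ℝ → ℝ)
    (hΨint : Integrable fun y : Rd d => Ψ ‖y‖)
    (f : Rd d → ℝ → ℝ → ℝ)
    (hmeas : Measurable fun q : Rd d × ℝ × ℝ => f q.1 q.2.1 q.2.2)
    (hnn : ∀ x v w, 0 ≤ f x v w)
    (hsupp : HasCompactSupport fun q : Rd d × ℝ × ℝ => f q.1 q.2.1 q.2.2)
    (hint : Integrable fun q : Rd d × ℝ × ℝ => f q.1 q.2.1 q.2.2)
    (hbdd : ∃ B, ∀ x v w, f x v w ≤ B) :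
    (1 / 2) * (∫ x : Rd d, ∫ v : ℝ, ∫ w : ℝ, ∫ x' : Rd d, ∫ v' : ℝ, ∫ w' : ℝ,
        psiEps d Ψ ε ‖x - x'‖ * (v - v') ^ 2 * f x v w * f x' v' w')
      = (∫ x : Rd d, (∫ x' : Rd d, psiEps d Ψ ε ‖x - x'‖ * rhoOf d f x')
            * ∫ v : ℝ, ∫ w : ℝ, (v - VOf d f x) ^ 2 * f x v w)
        + (1 / 2) * ∫ x : Rd d, ∫ x' : Rd d,
            psiEps d Ψ ε ‖x - x'‖ * (VOf d f x - VOf d f x') ^ 2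
              * rhoOf d f x * rhoOf d f x' := by
  obtain ⟨B, hB⟩ := hbdd
  obtain ⟨R, hR₀, hR⟩ := exists_norm_le_of_hasCompactSupport hsupp
  have hfB : ∀ x v w, ‖f x v w‖ ≤ B := fun x v w =>
    (Real.norm_of_nonneg (hnn x v w)).trans_le (hB x v w)
  have hM : ∀ n ≤ 2, Integrable (vMoment f n) := fun n _ => integrable_vMoment hmeas hfB hR hint n
  have hM_bdd : ∀ n ≤ 2, MemLp (vMoment f n) ∞ := fun n _ =>
    memLp_top_vMoment hmeas hfB hR volume n
  have hM₁_le := abs_vMoment_one_le hmeas hfB hR hnn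
  have hV_bdd : MemLp (VOf d f) ∞ := memLp_top_VOf hR₀ hM₁_le (measurable_vMoment hmeas hfB hR 0)
    (measurable_vMoment hmeas hfB hR 1) volume
  rw [rhoOf_eq_vMoment]
  exact kinetic_dissipation_decomposition (k := fun y => psiEps d Ψ ε ‖y‖)
    (fun y => by rw [norm_neg]) (integrable_psiEps d hε hΨint)
    (fun x n _ => integrable_integral_pow_mul hmeas hfB hR x n) hM hM_bdd
    (fun x => VOf_mul_vMoment_zero (hM₁_le x)) ((hM 1 one_le_two).mul_of_top_right hV_bdd)
    ((hM_bdd 1 one_le_two).mul hV_bdd)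

/-- decomposition of the kernel dissipation into an internal part
weighted by `Ψ_ε∗ρ` and a macroscopic part. -/
theorem stmt5 (d : ℕ) (hd : 1 ≤ d) (ε : ℝ) (hε : 0 < ε) (Ψ : ℝ → ℝ) (σ : ℝ)
    (hΨpos : ∀ᵐ r ∂(volume.restrict (Set.Ici (0 : ℝ))), 0 < Ψ r)
    (hΨint : Integrable fun y : Rd d => Ψ ‖y‖)
    (hΨ1 : (∫ y : Rd d, Ψ ‖y‖) = 1)
    (hσint : Integrable fun y : Rd d => Ψ ‖y‖ * ‖y‖ ^ 2)
    (hσdef : σ = (1 / 2) * ∫ y : Rd d, Ψ ‖y‖ * ‖y‖ ^ 2)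
    (hσpos : 0 < σ)
    (f : Rd d → ℝ → ℝ → ℝ)
    (hmeas : Measurable fun q : Rd d × ℝ × ℝ => f q.1 q.2.1 q.2.2)
    (hnn : ∀ x v w, 0 ≤ f x v w)
    (hsupp : HasCompactSupport fun q : Rd d × ℝ × ℝ => f q.1 q.2.1 q.2.2)
    (hint : Integrable fun q : Rd d × ℝ × ℝ => f q.1 q.2.1 q.2.2)
    (hbdd : ∃ B, ∀ x v w, f x v w ≤ B) :
    (1 / 2) * (∫ x : Rd d, ∫ v : ℝ, ∫ w : ℝ, ∫ x' : Rd d, ∫ v' : ℝ, ∫ w' : ℝ,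
        psiEps d Ψ ε ‖x - x'‖ * (v - v') ^ 2 * f x v w * f x' v' w')
      = (∫ x : Rd d, (∫ x' : Rd d, psiEps d Ψ ε ‖x - x'‖ * rhoOf d f x')
            * ∫ v : ℝ, ∫ w : ℝ, (v - VOf d f x) ^ 2 * f x v w)
        + (1 / 2) * ∫ x : Rd d, ∫ x' : Rd d,
            psiEps d Ψ ε ‖x - x'‖ * (VOf d f x - VOf d f x') ^ 2
              * rhoOf d f x * rhoOf d f x' :=
  stmt5_general d ε hε Ψ hΨint f hmeas hnn hsupp hint hbdd
end
end

section
/- Let d ≥ 1, a ∈ (0,1), and θ > 0 with (1+a)θ + 3θ ≤ 3. Let V : ℝ^d → ℝ be of class C² with compact support. Then ∫ ΔV(x) · Δ(N∘V)(x) dx ≤ (1 + 1/θ)(1+a) ∫ |ΔV(x)|² dx + (1 + a + 3/θ) ∫ |∇V(x)|⁴ dx. -/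
open MeasureTheory Real Filter Topology
open scoped RealInnerProductSpace

noncomputable section

/-
The inequality already holds pointwise, before integration. By the chain rule,
`Δ(N∘V) = N'(V) ΔV + N''(V) |∇V|²`; writing `L = ΔV`, `G = |∇V|²`, `v = V(x)`, the integrand is
`-3v²L² + 2(1+a)vL² - aL² + 2(1+a)LG - 6vLG`. Young's inequality bounds the cross terms by
`(1+a)(θv²L² + L²/θ)`, `(1+a)(L² + G²)` and `3θv²L² + 3G²/θ`; the assumption
`(1+a)θ + 3θ ≤ 3` makes the resulting `v²L²` terms absorbable by `-3v²L²`.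
-/

variable {d : ℕ}

theorem ContDiff.pdAt {m n : WithTop ℕ∞} {V : Rd d → ℝ} (hV : ContDiff ℝ n V) (hmn : m + 1 ≤ n)
    (i : Fin d) : ContDiff ℝ m (pdAt V i) :=
  (hV.fderiv_right hmn).clm_apply contDiff_const

theorem HasCompactSupport.pdAt {V : Rd d → ℝ} (hV : HasCompactSupport V) (i : Fin d) :
    HasCompactSupport (pdAt V i) :=
  hV.fderiv_apply ℝ _

theorem ContDiff.continuous_lapl {V : Rd d → ℝ} (hV : ContDiff ℝ 2 V) : Continuous (lapl V) :=
  continuous_finsetSum _ fun i _ =>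
    ((hV.pdAt (m := 1) (by norm_num) i).pdAt (m := 0) (by norm_num) i).continuous

theorem HasCompactSupport.lapl {V : Rd d → ℝ} (hV : HasCompactSupport V) :
    HasCompactSupport (lapl V) := by
  have h := HasCompactSupport.finset_sum (s := Finset.univ) fun i _ => (hV.pdAt i).pdAt i
  rwa [Finset.sum_fn] at h

theorem pdAt_comp {g : ℝ → ℝ} {g' : ℝ} {V : Rd d → ℝ} {x : Rd d} (hg : HasDerivAt g g' (V x))
    (hV : DifferentiableAt ℝ V x) (i : Fin d) :
    pdAt (fun y => g (V y)) i x = g' * pdAt V i x := by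
  have h : HasFDerivAt (fun y => g (V y)) (g' • fderiv ℝ V x) x :=
    hg.comp_hasFDerivAt x hV.hasFDerivAt
  simp [pdAt, h.fderiv]

theorem pdAt_mul {f g : Rd d → ℝ} {x : Rd d} (hf : DifferentiableAt ℝ f x)
    (hg : DifferentiableAt ℝ g x) (i : Fin d) :
    pdAt (fun y => f y * g y) i x = pdAt f i x * g x + f x * pdAt g i x := by
  rw [pdAt, pdAt, pdAt, fderiv_fun_mul hf hg]
  simp only [add_apply, smul_apply, smul_eq_mul]
  ring

theorem gradient_apply_eq_pdAt (V : Rd d → ℝ) (x : Rd d) (i : Fin d) :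
    gradient V x i = pdAt V i x := by
  have h : ⟪gradient V x, EuclideanSpace.single i (1 : ℝ)⟫ = pdAt V i x :=
    InnerProductSpace.toDual_symm_apply
  rw [EuclideanSpace.inner_single_right] at h
  simpa using h

theorem norm_gradient_sq (V : Rd d → ℝ) (x : Rd d) :
    ‖gradient V x‖ ^ 2 = ∑ i, pdAt V i x ^ 2 := by
  simp [EuclideanSpace.norm_sq_eq, gradient_apply_eq_pdAt]

theorem lapl_comp {g g' g'' : ℝ → ℝ} (hg : ∀ u, HasDerivAt g (g' u) u)
    (hg' : ∀ u, HasDerivAt g' (g'' u) u) {V : Rd d → ℝ} (hV : ContDiff ℝ 2 V) (x : Rd d) :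
    lapl (fun y => g (V y)) x = g' (V x) * lapl V x + g'' (V x) * ‖gradient V x‖ ^ 2 := by
  have hV1 : Differentiable ℝ V := hV.differentiable (by norm_num)
  have hpdV : ∀ i, pdAt (fun y => g (V y)) i = fun y => g' (V y) * pdAt V i y := fun i =>
    funext fun y => pdAt_comp (hg (V y)) (hV1 y) i
  have hpd2 : ∀ i, pdAt (pdAt (fun y => g (V y)) i) i x
      = g' (V x) * pdAt (pdAt V i) i x + g'' (V x) * pdAt V i x ^ 2 := fun i => by
    rw [hpdV, pdAt_mul (f := fun y => g' (V y)) ((hg' _).differentiableAt.comp x (hV1 x))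
      (((hV.pdAt (m := 1) (by norm_num) i).differentiable (by norm_num)) x),
      pdAt_comp (hg' _) (hV1 x)]
    ring
  simp only [lapl, hpd2, Finset.sum_add_distrib, ← Finset.mul_sum, norm_gradient_sq]

theorem ContDiff.continuous_gradient {F : Type*} [NormedAddCommGroup F] [InnerProductSpace ℝ F]
    [CompleteSpace F] {n : WithTop ℕ∞} {V : F → ℝ} (hV : ContDiff ℝ n V) (hn : n ≠ 0) :
    Continuous (gradient V) :=
  (InnerProductSpace.toDual ℝ F).symm.continuous.comp (hV.continuous_fderiv hn)

theorem HasCompactSupport.gradient {F : Type*} [NormedAddCommGroup F] [InnerProductSpace ℝ F]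
    [CompleteSpace F] {V : F → ℝ} (hV : HasCompactSupport V) :
    HasCompactSupport (gradient V) :=
  hV.fderiv ℝ |>.comp_left (map_zero _)

theorem hasDerivAt_Ncube (a u : ℝ) :
    HasDerivAt (Ncube a) (-3 * u ^ 2 + 2 * (1 + a) * u - a) u :=
  (((hasDerivAt_id' u).fun_mul ((hasDerivAt_id' u).const_sub 1)).fun_mul
    ((hasDerivAt_id' u).sub_const a)).congr_deriv (by ring)

theorem hasDerivAt_Ncube_deriv (a u : ℝ) :
    HasDerivAt (fun v => -3 * v ^ 2 + 2 * (1 + a) * v - a) (-6 * u + 2 * (1 + a)) u :=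
  ((((hasDerivAt_pow 2 u).const_mul (-3)).add
    ((hasDerivAt_id' u).const_mul (2 * (1 + a)))).sub_const a).congr_deriv (by ring)

theorem lapl_Ncube_comp (a : ℝ) {V : Rd d → ℝ} (hV : ContDiff ℝ 2 V) (x : Rd d) :
    lapl (fun y => Ncube a (V y)) x
      = (-3 * V x ^ 2 + 2 * (1 + a) * V x - a) * lapl V x
        + (-6 * V x + 2 * (1 + a)) * ‖gradient V x‖ ^ 2 :=
  lapl_comp (hasDerivAt_Ncube a) (hasDerivAt_Ncube_deriv a) hV x

theorem two_mul_le_mul_sq_add_sq_div {θ : ℝ} (hθ : 0 < θ) (x y : ℝ) :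
    2 * x * y ≤ θ * x ^ 2 + y ^ 2 / θ := by
  rw [← sub_nonneg]
  have h : θ * x ^ 2 + y ^ 2 / θ - 2 * x * y = (θ * x - y) ^ 2 / θ := by
    field_simp
    ring
  rw [h]
  positivity

theorem mul_Ncube_lapl_le {a θ : ℝ} (ha : 0 ≤ a) (hθ : 0 < θ) (hθ3 : (1 + a) * θ + 3 * θ ≤ 3)
    (v L G : ℝ) :
    L * ((-3 * v ^ 2 + 2 * (1 + a) * v - a) * L + (-6 * v + 2 * (1 + a)) * G)
      ≤ (1 + 1 / θ) * (1 + a) * L ^ 2 + (1 + a + 3 / θ) * G ^ 2 := by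
  have young_vL_L := two_mul_le_mul_sq_add_sq_div hθ (v * L) L
  have young_vL_G := two_mul_le_mul_sq_add_sq_div hθ (-(v * L)) G
  have young_L_G := two_mul_le_add_sq L G
  have absorb : 0 ≤ (3 - (1 + a) * θ - 3 * θ) * (v * L) ^ 2 :=
    mul_nonneg (by linarith) (sq_nonneg _)
  linear_combination (1 + a) * young_vL_L + 3 * young_vL_G + (1 + a) * young_L_G + absorb
    + mul_nonneg ha (sq_nonneg L)

theorem stmt17_general (d : ℕ) (a θ : ℝ) (ha : a ∈ Set.Ioo (0 : ℝ) 1)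
    (hθ : 0 < θ) (hθ3 : (1 + a) * θ + 3 * θ ≤ 3)
    (V : Rd d → ℝ) (hVC2 : ContDiff ℝ 2 V) (hVsupp : HasCompactSupport V) :
    (∫ x : Rd d, lapl V x * lapl (fun y => Ncube a (V y)) x)
      ≤ (1 + 1 / θ) * (1 + a) * (∫ x : Rd d, (lapl V x) ^ 2)
        + (1 + a + 3 / θ) * ∫ x : Rd d, ‖gradient V x‖ ^ 4 := by
  have hNV : ContDiff ℝ 2 fun y => Ncube a (V y) := by
    unfold Ncube
    fun_prop
  have int_lhs : Integrable fun x => lapl V x * lapl (fun y => Ncube a (V y)) x :=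
    (hVC2.continuous_lapl.mul hNV.continuous_lapl).integrable_of_hasCompactSupport
      hVsupp.lapl.mul_right
  have int_lapl_sq : Integrable fun x => lapl V x ^ 2 :=
    (hVC2.continuous_lapl.pow 2).integrable_of_hasCompactSupport
      (hVsupp.lapl.comp_left (g := fun t : ℝ => t ^ 2) (zero_pow two_ne_zero) :)
  have int_grad_pow : Integrable fun x => ‖gradient V x‖ ^ 4 :=
    ((hVC2.continuous_gradient two_ne_zero).norm.pow 4).integrable_of_hasCompactSupport
      (hVsupp.gradient.comp_left (g := fun y : Rd d => ‖y‖ ^ 4) (by simp) :)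
  have pointwise : ∀ x, lapl V x * lapl (fun y => Ncube a (V y)) x
      ≤ (1 + 1 / θ) * (1 + a) * lapl V x ^ 2 + (1 + a + 3 / θ) * ‖gradient V x‖ ^ 4 := fun x => by
    rw [lapl_Ncube_comp a hVC2 x, show ‖gradient V x‖ ^ 4 = (‖gradient V x‖ ^ 2) ^ 2 by ring]
    exact mul_Ncube_lapl_le ha.1.le hθ hθ3 _ _ _
  calc (∫ x, lapl V x * lapl (fun y => Ncube a (V y)) x)
      ≤ ∫ x, ((1 + 1 / θ) * (1 + a) * lapl V x ^ 2 + (1 + a + 3 / θ) * ‖gradient V x‖ ^ 4) :=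
        integral_mono int_lhs ((int_lapl_sq.const_mul _).add (int_grad_pow.const_mul _)) pointwise
    _ = _ := by
        rw [integral_add (int_lapl_sq.const_mul _) (int_grad_pow.const_mul _),
          integral_const_mul, integral_const_mul]

/-- the key nonlinear estimate
`∫ ΔV Δ(N∘V) ≤ (1+1/θ)(1+a) ∫ |ΔV|² + (1+a+3/θ) ∫ |∇V|⁴`. -/
theorem stmt17 (d : ℕ) (hd : 1 ≤ d) (a θ : ℝ) (ha : a ∈ Set.Ioo (0 : ℝ) 1)
    (hθ : 0 < θ) (hθ3 : (1 + a) * θ + 3 * θ ≤ 3)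
    (V : Rd d → ℝ) (hVC2 : ContDiff ℝ 2 V) (hVsupp : HasCompactSupport V) :
    (∫ x : Rd d, lapl V x * lapl (fun y => Ncube a (V y)) x)
      ≤ (1 + 1 / θ) * (1 + a) * (∫ x : Rd d, (lapl V x) ^ 2)
        + (1 + a + 3 / θ) * ∫ x : Rd d, ‖gradient V x‖ ^ 4 :=
  stmt17_general d a θ ha hθ hθ3 V hVC2 hVsupp
end
end

section
/- Let d ≥ 1, ε > 0, and let Ψ satisfy the kernel assumptions. Let ρ0^ε ∈ L¹(ℝ^d)∩L^∞(ℝ^d) be nonnegative, let ρ0 ∈ L²(ℝ^d), let V : ℝ^d → ℝ be bounded measurable, and let V^ε : ℝ^d → ℝ be measurable with ρ0^ε |V^ε|² integrable. Then ε^{-2} ∬ Ψ_ε(‖x−x'‖) ρ0^ε(x)(V^ε(x)−V(x)) [ ρ0^ε(x')(V^ε(x')−V^ε(x)) − ρ0(x')(V(x')−V(x)) ] dx' dx ≤ 2‖V‖_{L^∞} · 𝓗 + ε^{-4} ‖V‖_{L^∞} ‖ρ0^ε‖_{L^∞} ‖ρ0 − ρ0^ε‖²_{L²}, where 𝓗 :=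 (1/2)∫ ρ0^ε(x) |V^ε(x)−V(x)|² dx. -/
open MeasureTheory Real Filter Topology
open scoped RealInnerProductSpace

noncomputable section

/-!
Write `f = Vε - V` and split the bracket as
`ρ0ε(x') (f(x') - f(x)) + (ρ0ε(x') - ρ0(x')) (V(x') - V(x))`.
The first part gives a Dirichlet form: symmetrising in `x ↔ x'` with the even, a.e. nonnegative
kernel `Ψ_ε` turns it into `-½ ∬ Ψ_ε(‖x - x'‖) ρ0ε(x) ρ0ε(x') (f(x) - f(x'))² ≤ 0`.
In the second part `|V(x') - V(x)| ≤ 2‖V‖_∞`, and Young's inequality `2ab ≤ ε² a² + ε⁻² b²`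
bounds the integrand by
`‖V‖_∞ Ψ_ε(‖x - x'‖) (ε² ρ0ε(x) f(x)² + ε⁻² ‖ρ0ε‖_∞ (ρ0 - ρ0ε)(x')²)`,
which integrates to the right-hand side because `∫ Ψ_ε = 1`.
-/

open Set

lemma abs_mul_mul_le_young {r g δ v B C t : ℝ} (ht : 0 < t) (hr0 : 0 ≤ r) (hrB : r ≤ B)
    (hv : |v| ≤ 2 * C) :
    |r * g * (δ * v)| ≤ C * t * (r * g ^ 2) + C * B * t⁻¹ * δ ^ 2 := by
  have hC : 0 ≤ C := by linarith [abs_nonneg v]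
  have hyoung := two_mul_le_add_mul_sq (a := |g|) (b := |δ|) ht
  rw [sq_abs, sq_abs] at hyoung
  calc |r * g * (δ * v)| = r * (|g| * |δ|) * |v| := by
        rw [abs_mul, abs_mul, abs_mul, abs_of_nonneg hr0]; ring
    _ ≤ r * (|g| * |δ|) * (2 * C) := by gcongr
    _ = C * r * (2 * |g| * |δ|) := by ring
    _ ≤ C * r * (t * g ^ 2 + t⁻¹ * δ ^ 2) := by gcongr
    _ = C * t * (r * g ^ 2) + C * t⁻¹ * (r * δ ^ 2) := by ring
    _ ≤ C * t * (r * g ^ 2) + C * t⁻¹ * (B * δ ^ 2) := by gcongr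
    _ = C * t * (r * g ^ 2) + C * B * t⁻¹ * δ ^ 2 := by ring

/-- In polar coordinates a Haar measure is, away from the origin, the product of a measure on the
sphere and a measure on the radii that is absolutely continuous with respect to Lebesgue measure. -/
theorem ae_norm_of_ae_Ioi {E : Type*} [NormedAddCommGroup E] [NormedSpace ℝ E]
    [FiniteDimensional ℝ E] [MeasurableSpace E] [BorelSpace E] [Nontrivial E]
    (μ : Measure E) [μ.IsAddHaarMeasure] {p : ℝ → Prop}
    (hp : ∀ᵐ r ∂volume.restrict (Ioi (0 : ℝ)), p r) : ∀ᵐ x ∂μ, p ‖x‖ := by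
  rw [← restrict_compl_singleton (μ := μ) (0 : E),
    ae_restrict_iff_subtype (measurableSet_singleton 0).compl]
  rw [ae_restrict_iff_subtype measurableSet_Ioi] at hp
  have hradii : ∀ᵐ r ∂Measure.volumeIoiPow (Module.finrank ℝ E - 1), p r.1 :=
    withDensity_absolutelyContinuous _ _ hp
  simpa using μ.measurePreserving_homeomorphUnitSphereProd.quasiMeasurePreserving.ae
    (Measure.quasiMeasurePreserving_snd.ae hradii)

section RescaledKernel

variable {d : ℕ} {Ψ : ℝ → ℝ} {ε : ℝ}

lemma psiEps_norm_eq (hε : 0 < ε) (y : Rd d) :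
    psiEps d Ψ ε ‖y‖ = (ε ^ d)⁻¹ * Ψ ‖ε⁻¹ • y‖ := by
  rw [psiEps, norm_smul, norm_inv, Real.norm_of_nonneg hε.le, div_eq_inv_mul]

lemma integrable_psiEps_s18 (hε : 0 < ε) (hΨ : Integrable fun y : Rd d => Ψ ‖y‖) :
    Integrable fun y : Rd d => psiEps d Ψ ε ‖y‖ := by
  simp_rw [psiEps_norm_eq hε]
  exact ((integrable_comp_smul_iff volume (fun y : Rd d => Ψ ‖y‖)
    (inv_ne_zero hε.ne')).2 hΨ).const_mul _

lemma integral_psiEps (hε : 0 < ε) :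
    ∫ y : Rd d, psiEps d Ψ ε ‖y‖ = ∫ y : Rd d, Ψ ‖y‖ := by
  simp_rw [psiEps_norm_eq hε]
  rw [integral_const_mul,
    Measure.integral_comp_inv_smul_of_nonneg volume (fun y : Rd d => Ψ ‖y‖) hε.le,
    finrank_euclideanSpace_fin, smul_eq_mul, inv_mul_cancel_left₀ (pow_pos hε d).ne']

lemma ae_nonneg_psiEps (hd : 1 ≤ d) (hε : 0 < ε)
    (hΨ : ∀ᵐ r ∂volume.restrict (Ici (0 : ℝ)), 0 < Ψ r) :
    ∀ᵐ y : Rd d, 0 ≤ psiEps d Ψ ε ‖y‖ := by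
  have : Nonempty (Fin d) := ⟨⟨0, hd⟩⟩
  have hΨnorm : ∀ᵐ y : Rd d, 0 < Ψ ‖y‖ :=
    ae_norm_of_ae_Ioi volume (ae_restrict_of_ae_restrict_of_subset Ioi_subset_Ici_self hΨ)
  filter_upwards [(Measure.quasiMeasurePreserving_smul volume (inv_ne_zero hε.ne')).ae hΨnorm]
    with y hy
  rw [psiEps_norm_eq hε]
  positivity

end RescaledKernel

section Integrability

variable {α : Type*} [MeasurableSpace α] {μ : Measure α} {ρ : α → ℝ}

lemma integrable_mul_sub_sq {V W : α → ℝ} {C : ℝ} (hρ : Measurable ρ) (hρ0 : ∀ x, 0 ≤ ρ x)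
    (hρi : Integrable ρ μ) (hV : Measurable V) (hVC : ∀ x, |V x| ≤ C) (hW : Measurable W)
    (hρW : Integrable (fun x => ρ x * W x ^ 2) μ) :
    Integrable (fun x => ρ x * (W x - V x) ^ 2) μ := by
  refine ((hρW.const_mul 2).add (hρi.const_mul (2 * C ^ 2))).mono' (by fun_prop)
    (ae_of_all _ fun x => ?_)
  have hV2 : V x ^ 2 ≤ C ^ 2 := sq_le_sq' (abs_le.1 (hVC x)).1 (abs_le.1 (hVC x)).2
  have hx := hρ0 x
  rw [Real.norm_of_nonneg (by positivity), Pi.add_apply]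
  nlinarith [mul_nonneg hx (sq_nonneg (W x + V x)), mul_le_mul_of_nonneg_left hV2 hx]

lemma integrable_sub_sq {ρ₀ : α → ℝ} {B : ℝ} (hρ₀ : Measurable ρ₀)
    (hρ₀2 : Integrable (fun x => ρ₀ x ^ 2) μ) (hρ : Measurable ρ) (hρ0 : ∀ x, 0 ≤ ρ x)
    (hρB : ∀ x, ρ x ≤ B) (hρi : Integrable ρ μ) :
    Integrable (fun x => (ρ₀ x - ρ x) ^ 2) μ := by
  refine ((hρ₀2.const_mul 2).add (hρi.const_mul (2 * B))).mono' (by fun_prop)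
    (ae_of_all _ fun x => ?_)
  rw [Real.norm_of_nonneg (sq_nonneg _), Pi.add_apply]
  nlinarith [sq_nonneg (ρ₀ x + ρ x), mul_le_mul_of_nonneg_right (hρB x) (hρ0 x)]

end Integrability

section KernelIntegrals

variable {G : Type*} [AddCommGroup G] [MeasurableSpace G] [MeasurableAdd₂ G] [MeasurableNeg G]
  {μ : Measure G} [SFinite μ] [μ.IsAddLeftInvariant] {k m : G → ℝ}

lemma integrable_kernel_mul_snd (hk : Integrable k μ) (hm : Integrable m μ) :
    Integrable (fun p : G × G => k (p.1 - p.2) * m p.2) (μ.prod μ) := by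
  simpa only [ContinuousLinearMap.mul_apply', mul_comm] using
    hm.convolution_integrand (ContinuousLinearMap.mul ℝ ℝ) hk

lemma integrable_kernel_mul_fst [μ.IsNegInvariant] (hk : Integrable k μ) (hm : Integrable m μ) :
    Integrable (fun p : G × G => k (p.1 - p.2) * m p.1) (μ.prod μ) := by
  simpa only [Function.comp_def, Prod.fst_swap, Prod.snd_swap, neg_sub] using
    (integrable_kernel_mul_snd hk.comp_neg hm).swap

lemma integral_kernel_mul_fst [μ.IsNegInvariant] (hk : Integrable k μ) (hm : Integrable m μ) :
    ∫ p : G × G, k (p.1 - p.2) * m p.1 ∂μ.prod μ = (∫ y, k y ∂μ) * ∫ x, m x ∂μ := by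
  rw [integral_prod _ (integrable_kernel_mul_fst hk hm), ← integral_const_mul]
  congr 1 with x
  dsimp only
  rw [integral_mul_const, integral_sub_left_eq_self k μ x]

lemma integral_kernel_mul_snd (hk : Integrable k μ) (hm : Integrable m μ) :
    ∫ p : G × G, k (p.1 - p.2) * m p.2 ∂μ.prod μ = (∫ y, k y ∂μ) * ∫ x, m x ∂μ := by
  rw [integral_prod_symm _ (integrable_kernel_mul_snd hk hm), ← integral_const_mul]
  congr 1 with y
  dsimp only
  rw [integral_mul_const, integral_sub_right_eq_self k y]

lemma ae_nonneg_kernel_sub (hk : ∀ᵐ y ∂μ, 0 ≤ k y) :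
    ∀ᵐ p : G × G ∂μ.prod μ, 0 ≤ k (p.1 - p.2) :=
  (quasiMeasurePreserving_sub_of_right_invariant μ μ).ae hk

end KernelIntegrals

section KernelEstimates

variable {G : Type*} [AddCommGroup G] [MeasurableSpace G] [MeasurableAdd₂ G] [MeasurableNeg G]
  {μ : Measure G} [SFinite μ] [μ.IsAddLeftInvariant] [μ.IsNegInvariant] {k : G → ℝ}

lemma integrable_kernel_mul_of_abs_le {R : G × G → ℝ} {a b : G → ℝ} (hk : Integrable k μ)
    (hk0 : ∀ᵐ y ∂μ, 0 ≤ k y) (ha : Integrable a μ) (hb : Integrable b μ)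
    (hR : AEStronglyMeasurable R (μ.prod μ)) (hRle : ∀ x y, |R (x, y)| ≤ a x + b y) :
    Integrable (fun p : G × G => k (p.1 - p.2) * R p) (μ.prod μ) := by
  refine ((integrable_kernel_mul_fst hk ha).add (integrable_kernel_mul_snd hk hb)).mono'
    ((hk.aestronglyMeasurable.comp_quasiMeasurePreserving
      (quasiMeasurePreserving_sub_of_right_invariant μ μ)).mul hR) ?_
  filter_upwards [ae_nonneg_kernel_sub hk0] with p hp
  rw [Pi.add_apply, Real.norm_eq_abs, abs_mul, abs_of_nonneg hp, ← mul_add]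
  exact mul_le_mul_of_nonneg_left (hRle p.1 p.2) hp

lemma integral_kernel_mul_le_of_abs_le {R : G × G → ℝ} {a b : G → ℝ} (hk : Integrable k μ)
    (hk0 : ∀ᵐ y ∂μ, 0 ≤ k y) (ha : Integrable a μ) (hb : Integrable b μ)
    (hR : AEStronglyMeasurable R (μ.prod μ)) (hRle : ∀ x y, |R (x, y)| ≤ a x + b y) :
    ∫ p : G × G, k (p.1 - p.2) * R p ∂μ.prod μ
      ≤ (∫ y, k y ∂μ) * (∫ x, a x ∂μ + ∫ y, b y ∂μ) := by
  have hka := integrable_kernel_mul_fst hk ha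
  have hkb := integrable_kernel_mul_snd hk hb
  calc ∫ p : G × G, k (p.1 - p.2) * R p ∂μ.prod μ
      ≤ ∫ p : G × G, k (p.1 - p.2) * a p.1 + k (p.1 - p.2) * b p.2 ∂μ.prod μ := by
        refine integral_mono_ae (integrable_kernel_mul_of_abs_le hk hk0 ha hb hR hRle)
          (hka.add hkb) ?_
        filter_upwards [ae_nonneg_kernel_sub hk0] with p hp
        rw [← mul_add]
        exact mul_le_mul_of_nonneg_left ((le_abs_self _).trans (hRle p.1 p.2)) hp
    _ = _ := by
        rw [integral_add hka hkb, integral_kernel_mul_fst hk ha, integral_kernel_mul_snd hk hb,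
          mul_add]

variable {ρ f : G → ℝ} {B : ℝ}

lemma integrable_kernel_dirichlet (hk : Integrable k μ) (hk0 : ∀ᵐ y ∂μ, 0 ≤ k y)
    (hρ : Measurable ρ) (hρ0 : ∀ x, 0 ≤ ρ x) (hρB : ∀ x, ρ x ≤ B) (hf : Measurable f)
    (hρf : Integrable (fun x => ρ x * f x ^ 2) μ) :
    Integrable (fun p : G × G => k (p.1 - p.2) * (ρ p.1 * f p.1 * (ρ p.2 * (f p.2 - f p.1))))
      (μ.prod μ) := by
  refine integrable_kernel_mul_of_abs_le hk hk0 (hρf.const_mul (2 * B)) (hρf.const_mul B)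
    (by fun_prop) fun x y => ?_
  have hx := hρ0 x
  have hy := hρ0 y
  have hρBx := hρB x
  have hρBy := hρB y
  have hB : 0 ≤ B := hx.trans hρBx
  have hamgm := two_mul_le_add_sq |f x| |f y|
  rw [sq_abs, sq_abs] at hamgm
  have hmixed : |ρ x * ρ y * (f x * f y)| ≤ B / 2 * (ρ x * f x ^ 2) + B / 2 * (ρ y * f y ^ 2) :=
    calc |ρ x * ρ y * (f x * f y)| = ρ x * ρ y * (2 * |f x| * |f y|) / 2 := by
          rw [abs_mul, abs_mul, abs_mul, abs_of_nonneg hx, abs_of_nonneg hy]; ring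
      _ ≤ ρ x * ρ y * (f x ^ 2 + f y ^ 2) / 2 := by gcongr
      _ = (ρ y * (ρ x * f x ^ 2) + ρ x * (ρ y * f y ^ 2)) / 2 := by ring
      _ ≤ (B * (ρ x * f x ^ 2) + B * (ρ y * f y ^ 2)) / 2 := by gcongr
      _ = B / 2 * (ρ x * f x ^ 2) + B / 2 * (ρ y * f y ^ 2) := by ring
  have hdiag : ρ y * (ρ x * f x ^ 2) ≤ B * (ρ x * f x ^ 2) := by gcongr
  calc |ρ x * f x * (ρ y * (f y - f x))|
      = |ρ x * ρ y * (f x * f y) - ρ y * (ρ x * f x ^ 2)| := by ring_nf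
    _ ≤ |ρ x * ρ y * (f x * f y)| + ρ y * (ρ x * f x ^ 2) := by
        refine (abs_sub _ _).trans ?_
        rw [abs_of_nonneg (by positivity : 0 ≤ ρ y * (ρ x * f x ^ 2))]
    _ ≤ 2 * B * (ρ x * f x ^ 2) + B * (ρ y * f y ^ 2) := by
        linarith [mul_nonneg hB (mul_nonneg hx (sq_nonneg (f x))),
          mul_nonneg hB (mul_nonneg hy (sq_nonneg (f y)))]

lemma integral_kernel_dirichlet_nonpos (hk : Integrable k μ) (hke : ∀ y, k (-y) = k y)
    (hk0 : ∀ᵐ y ∂μ, 0 ≤ k y) (hρ : Measurable ρ) (hρ0 : ∀ x, 0 ≤ ρ x) (hρB : ∀ x, ρ x ≤ B)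
    (hf : Measurable f) (hρf : Integrable (fun x => ρ x * f x ^ 2) μ) :
    ∫ p : G × G, k (p.1 - p.2) * (ρ p.1 * f p.1 * (ρ p.2 * (f p.2 - f p.1))) ∂μ.prod μ ≤ 0 := by
  set D := fun p : G × G => k (p.1 - p.2) * (ρ p.1 * f p.1 * (ρ p.2 * (f p.2 - f p.1)))
  have hD : Integrable D (μ.prod μ) := integrable_kernel_dirichlet hk hk0 hρ hρ0 hρB hf hρf
  have hsymm : ∫ p, D p + D p.swap ∂μ.prod μ ≤ 0 := by
    refine integral_nonpos_of_ae ?_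
    filter_upwards [ae_nonneg_kernel_sub hk0] with p hp
    have hswap : D p + D p.swap = -(k (p.1 - p.2) * (ρ p.1 * ρ p.2 * (f p.1 - f p.2) ^ 2)) := by
      simp only [D, Prod.fst_swap, Prod.snd_swap]
      rw [← neg_sub p.1 p.2, hke]
      ring
    rw [Pi.zero_apply, hswap, neg_nonpos]
    exact mul_nonneg hp (mul_nonneg (mul_nonneg (hρ0 _) (hρ0 _)) (sq_nonneg _))
  rw [integral_add hD (hD.swap : Integrable (fun p => D p.swap) _), integral_prod_swap] at hsymm
  linarith

theorem integral_kernel_modulation_le {ρ₀ V W : G → ℝ} {C t : ℝ} (hk : Integrable k μ)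
    (hke : ∀ y, k (-y) = k y) (hk0 : ∀ᵐ y ∂μ, 0 ≤ k y) (hρ : Measurable ρ)
    (hρ0 : ∀ x, 0 ≤ ρ x) (hρB : ∀ x, ρ x ≤ B) (hρ₀ : Measurable ρ₀) (hV : Measurable V)
    (hVC : ∀ x, |V x| ≤ C) (hW : Measurable W)
    (hH : Integrable (fun x => ρ x * (W x - V x) ^ 2) μ)
    (hq : Integrable (fun x => (ρ₀ x - ρ x) ^ 2) μ) (ht : 0 < t) :
    ∫ x, ∫ y, k (x - y) * ρ x * (W x - V x) * (ρ y * (W y - W x) - ρ₀ y * (V y - V x)) ∂μ ∂μ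
      ≤ (∫ y, k y ∂μ) * (C * t * ∫ x, ρ x * (W x - V x) ^ 2 ∂μ
        + C * B * t⁻¹ * ∫ x, (ρ₀ x - ρ x) ^ 2 ∂μ) := by
  set f := fun x => W x - V x
  have hf : Measurable f := hW.sub hV
  have hcross : ∀ x y, |ρ x * f x * ((ρ₀ y - ρ y) * (V x - V y))|
      ≤ C * t * (ρ x * f x ^ 2) + C * B * t⁻¹ * (ρ₀ y - ρ y) ^ 2 := fun x y =>
    abs_mul_mul_le_young ht (hρ0 x) (hρB x)
      ((abs_sub _ _).trans (by linarith [hVC x, hVC y]))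
  have hRmeas : AEStronglyMeasurable
      (fun p : G × G => ρ p.1 * f p.1 * ((ρ₀ p.2 - ρ p.2) * (V p.1 - V p.2))) (μ.prod μ) := by
    fun_prop
  have hD := integrable_kernel_dirichlet hk hk0 hρ hρ0 hρB hf hH
  have hR := integrable_kernel_mul_of_abs_le hk hk0 (hH.const_mul (C * t))
    (hq.const_mul (C * B * t⁻¹)) hRmeas hcross
  have hsplit : ∀ p : G × G,
      k (p.1 - p.2) * ρ p.1 * (W p.1 - V p.1)
          * (ρ p.2 * (W p.2 - W p.1) - ρ₀ p.2 * (V p.2 - V p.1))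
        = k (p.1 - p.2) * (ρ p.1 * f p.1 * (ρ p.2 * (f p.2 - f p.1)))
          + k (p.1 - p.2) * (ρ p.1 * f p.1 * ((ρ₀ p.2 - ρ p.2) * (V p.1 - V p.2))) := by
    intro p
    simp only [f]
    ring
  rw [integral_integral
    (by simpa only [Function.uncurry_def, hsplit, Pi.add_def] using hD.add hR)]
  simp only [hsplit]
  rw [integral_add hD hR]
  have hDle := integral_kernel_dirichlet_nonpos hk hke hk0 hρ hρ0 hρB hf hH
  have hRle := integral_kernel_mul_le_of_abs_le hk hk0 (hH.const_mul (C * t))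
    (hq.const_mul (C * B * t⁻¹)) hRmeas hcross
  rw [integral_const_mul, integral_const_mul] at hRle
  linarith

end KernelEstimates

theorem stmt18_general (d : ℕ) (hd : 1 ≤ d) (ε : ℝ) (hε : 0 < ε) (Ψ : ℝ → ℝ)
    (hΨpos : ∀ᵐ r ∂(volume.restrict (Set.Ici (0 : ℝ))), 0 < Ψ r)
    (hΨint : Integrable fun y : Rd d => Ψ ‖y‖)
    (hΨ1 : (∫ y : Rd d, Ψ ‖y‖) = 1)
    (ρ0ε ρ0 V Vε : Rd d → ℝ)
    (hρεmeas : Measurable ρ0ε) (hρεnn : ∀ x, 0 ≤ ρ0ε x)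
    (hρεint : Integrable ρ0ε) (Bρ : ℝ) (hρεbdd : ∀ x, ρ0ε x ≤ Bρ)
    (hρ0meas : Measurable ρ0) (hρ0L2 : Integrable fun x => (ρ0 x) ^ 2)
    (hVmeas : Measurable V) (BV : ℝ) (hVbdd : ∀ x, |V x| ≤ BV)
    (hVεmeas : Measurable Vε)
    (hVεint : Integrable fun x => ρ0ε x * (Vε x) ^ 2) :
    (ε ^ 2)⁻¹ * (∫ x : Rd d, ∫ x' : Rd d, psiEps d Ψ ε ‖x - x'‖ * ρ0ε x * (Vε x - V x)
        * (ρ0ε x' * (Vε x' - Vε x) - ρ0 x' * (V x' - V x)))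
      ≤ 2 * BV * ((1 / 2) * ∫ x : Rd d, ρ0ε x * (Vε x - V x) ^ 2)
        + (ε ^ 4)⁻¹ * BV * Bρ * ∫ x : Rd d, (ρ0 x - ρ0ε x) ^ 2 := by
  have hmain := integral_kernel_modulation_le (k := fun y : Rd d => psiEps d Ψ ε ‖y‖)
    (integrable_psiEps_s18 hε hΨint) (fun y => by rw [norm_neg]) (ae_nonneg_psiEps hd hε hΨpos)
    hρεmeas hρεnn hρεbdd hρ0meas hVmeas hVbdd hVεmeas
    (integrable_mul_sub_sq hρεmeas hρεnn hρεint hVmeas hVbdd hVεmeas hVεint)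
    (integrable_sub_sq hρ0meas hρ0L2 hρεmeas hρεnn hρεbdd hρεint) (pow_pos hε 2)
  rw [integral_psiEps hε, hΨ1, one_mul] at hmain
  set H := ∫ x : Rd d, ρ0ε x * (Vε x - V x) ^ 2
  set Q := ∫ x : Rd d, (ρ0 x - ρ0ε x) ^ 2
  calc _ ≤ (ε ^ 2)⁻¹ * (BV * ε ^ 2 * H + BV * Bρ * (ε ^ 2)⁻¹ * Q) := by gcongr
    _ = _ := by field_simp

/-- the estimate of the modulation of the nonlocal diffusion term
by the limiting one in the modulated energy computation. -/
theorem stmt18 (d : ℕ) (hd : 1 ≤ d) (ε : ℝ) (hε : 0 < ε) (Ψ : ℝ → ℝ) (σ : ℝ)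
    (hΨpos : ∀ᵐ r ∂(volume.restrict (Set.Ici (0 : ℝ))), 0 < Ψ r)
    (hΨint : Integrable fun y : Rd d => Ψ ‖y‖)
    (hΨ1 : (∫ y : Rd d, Ψ ‖y‖) = 1)
    (hσint : Integrable fun y : Rd d => Ψ ‖y‖ * ‖y‖ ^ 2)
    (hσdef : σ = (1 / 2) * ∫ y : Rd d, Ψ ‖y‖ * ‖y‖ ^ 2)
    (hσpos : 0 < σ)
    (ρ0ε ρ0 V Vε : Rd d → ℝ)
    (hρεmeas : Measurable ρ0ε) (hρεnn : ∀ x, 0 ≤ ρ0ε x)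
    (hρεint : Integrable ρ0ε) (Bρ : ℝ) (hρεbdd : ∀ x, ρ0ε x ≤ Bρ)
    (hρ0meas : Measurable ρ0) (hρ0L2 : Integrable fun x => (ρ0 x) ^ 2)
    (hVmeas : Measurable V) (BV : ℝ) (hVbdd : ∀ x, |V x| ≤ BV)
    (hVεmeas : Measurable Vε)
    (hVεint : Integrable fun x => ρ0ε x * (Vε x) ^ 2) :
    (ε ^ 2)⁻¹ * (∫ x : Rd d, ∫ x' : Rd d, psiEps d Ψ ε ‖x - x'‖ * ρ0ε x * (Vε x - V x)
        * (ρ0ε x' * (Vε x' - Vε x) - ρ0 x' * (V x' - V x)))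
      ≤ 2 * BV * ((1 / 2) * ∫ x : Rd d, ρ0ε x * (Vε x - V x) ^ 2)
        + (ε ^ 4)⁻¹ * BV * Bρ * ∫ x : Rd d, (ρ0 x - ρ0ε x) ^ 2 :=
  stmt18_general d hd ε hε Ψ hΨpos hΨint hΨ1 ρ0ε ρ0 V Vε hρεmeas hρεnn hρεint Bρ hρεbdd hρ0meas
    hρ0L2 hVmeas BV hVbdd hVεmeas hVεint
end
end
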